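/- If 1 ≤ t ≤ n/2 and F is a forest in K_n with exactly t edges that is not a union of t pairwise vertex-disjoint edges, then the number of spanning trees of K_n containing F is at most (3/4)·2^t·n^{n−t−2}. -/

import Mathlib

/-!
For a forest `F` on `n` vertices with components `C₁, …, C_k`, the number `τ(F)` of spanning
trees containing `F` satisfies `τ(F) · n = |C₁| ⋯ |C_k| · n ^ (k - 1)`. This is proved by induction
on `k`, double counting over the ordered pairs `(u, v)` of vertices in different components. A
spanning tree `T ⊇ F` has exactly `k - 1` edges outside `F`, and these are exactly its edges
joining different components, so `∑ τ(F + uv) = 2 (k - 1) τ(F)`. Joining `C_u` and `C_v` multiplies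
the product of the component sizes by `1 / |C_u| + 1 / |C_v|`, and `∑_w 1 / |C_w| = k`, so the
products for `F + uv` sum to `2 (k - 1) n ∏ |C_i|`.

The forest has `t = n - k` edges, so `∑ (|C_i| - 1) = t`. A vertex of degree at least `2` lies in
a component with at least `3` vertices. Since `a ≤ 2 ^ (a - 1)` for `a ≥ 1` and
`4 a ≤ 3 · 2 ^ (a - 1)` for `a ≥ 3`, this gives `∏ |C_i| ≤ (3 / 4) · 2 ^ t`.
-/

open SimpleGraph Finset

namespace SimpleGraph

section Reachable

variable {V : Type*} {F : SimpleGraph V} {u v x y : V}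

lemma reachable_sup_edge (F : SimpleGraph V) (u v : V) : (F ⊔ edge u v).Reachable u v := by
  rcases eq_or_ne u v with rfl | huv
  · rfl
  · exact Adj.reachable (Or.inr ((edge_adj ..).2 ⟨.inl ⟨rfl, rfl⟩, huv⟩))

lemma reachable_sup_edge_iff : (F ⊔ edge u v).Reachable x y ↔ F.Reachable x y ∨
      F.Reachable x u ∧ F.Reachable v y ∨ F.Reachable x v ∧ F.Reachable u y := by
  constructor
  · rintro ⟨w⟩
    induction w with
    | nil => exact .inl .rfl
    | cons h _ ih =>
      rcases h with h | h
      · have r := h.reachable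
        exact ih.imp r.trans (Or.imp (And.imp_left r.trans) (And.imp_left r.trans))
      · rcases (edge_adj ..).1 h with ⟨⟨rfl, rfl⟩ | ⟨rfl, rfl⟩, -⟩ <;>
          grind [Reachable.refl, Reachable.symm, Reachable.trans]
  · have r := F.reachable_sup_edge u v
    have hle : F ≤ F ⊔ edge u v := le_sup_left
    rintro (h | ⟨h1, h2⟩ | ⟨h1, h2⟩)
    · exact h.mono hle
    · exact ((h1.mono hle).trans r).trans (h2.mono hle)
    · exact ((h1.mono hle).trans r.symm).trans (h2.mono hle)

lemma IsAcyclic.adj_of_le_of_reachable {T : SimpleGraph V} (hT : T.IsAcyclic) (hle : F ≤ T)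
    (hadj : T.Adj u v) (hr : F.Reachable u v) : F.Adj u v := by
  obtain ⟨p, hp⟩ := hr.exists_isPath
  have := congrArg (fun q : T.Path u v => q.1.edges)
    ((hT.subsingleton_path u v).elim ⟨p.mapLe hle, hp.mapLe hle⟩ (Path.singleton hadj))
  simp only [Walk.edges_map, Hom.coe_ofLE, Sym2.map_id, List.map_id_fun, id_eq] at this
  simp [this, p.adj_of_mem_edges]

end Reachable

noncomputable section

open Classical

variable {V : Type*} [Fintype V] {F : SimpleGraph V} {u v x : V}

def componentFinset (F : SimpleGraph V) (u : V) : Finset V := {v | F.Reachable u v}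

def componentFinsets (F : SimpleGraph V) : Finset (Finset V) := univ.image F.componentFinset

def unreachablePairs (F : SimpleGraph V) : Finset (V × V) := {p | ¬F.Reachable p.1 p.2}

def spanningTreesAbove (F : SimpleGraph V) : Finset (SimpleGraph V) := {T | F ≤ T ∧ T.IsTree}

@[simp]
lemma mem_unreachablePairs {p : V × V} : p ∈ F.unreachablePairs ↔ ¬F.Reachable p.1 p.2 := by
  simp [unreachablePairs]

@[simp]
lemma mem_componentFinset : v ∈ F.componentFinset u ↔ F.Reachable u v := by
  simp [componentFinset]

lemma self_mem_componentFinset (F : SimpleGraph V) (u : V) : u ∈ F.componentFinset u :=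
  mem_componentFinset.2 .rfl

lemma card_componentFinset_pos (F : SimpleGraph V) (u : V) : 0 < #(F.componentFinset u) :=
  card_pos.2 ⟨u, self_mem_componentFinset F u⟩

lemma componentFinset_eq_iff : F.componentFinset u = F.componentFinset v ↔ F.Reachable u v := by
  refine ⟨fun h => mem_componentFinset.1 (h ▸ self_mem_componentFinset F v), fun h => ?_⟩
  ext w
  simp only [mem_componentFinset]
  exact ⟨h.symm.trans, h.trans⟩

lemma mem_componentFinsets {s : Finset V} :
    s ∈ F.componentFinsets ↔ ∃ u, F.componentFinset u = s := by
  simp [componentFinsets]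

lemma componentFinset_mem_componentFinsets (F : SimpleGraph V) (u : V) :
    F.componentFinset u ∈ F.componentFinsets :=
  mem_componentFinsets.2 ⟨u, rfl⟩

lemma one_le_card_componentFinsets [Nonempty V] (F : SimpleGraph V) :
    1 ≤ #F.componentFinsets :=
  card_pos.2 ⟨_, componentFinset_mem_componentFinsets F (Classical.arbitrary V)⟩

lemma card_pos_of_mem_componentFinsets {s : Finset V} (hs : s ∈ F.componentFinsets) :
    0 < #s := by
  obtain ⟨u, rfl⟩ := mem_componentFinsets.1 hs
  exact F.card_componentFinset_pos u

lemma componentFinset_eq_of_mem {s : Finset V} (hs : s ∈ F.componentFinsets) (hu : u ∈ s) :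
    F.componentFinset u = s := by
  obtain ⟨w, rfl⟩ := mem_componentFinsets.1 hs
  exact componentFinset_eq_iff.2 (mem_componentFinset.1 hu).symm

lemma sum_componentFinset {M : Type*} [AddCommMonoid M] (F : SimpleGraph V) (f : Finset V → M) :
    ∑ v, f (F.componentFinset v) = ∑ s ∈ F.componentFinsets, #s • f s := by
  rw [← sum_fiberwise_of_maps_to fun v _ => componentFinset_mem_componentFinsets F v]
  refine sum_congr rfl fun s hs => ?_
  have hfiber : ({v | F.componentFinset v = s} : Finset V) = s := by
    ext v
    simp only [mem_filter, mem_univ, true_and]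
    exact ⟨fun h => h ▸ self_mem_componentFinset F v, componentFinset_eq_of_mem hs⟩
  rw [sum_congr rfl fun v hv => by rw [(mem_filter.1 hv).2], sum_const, hfiber]

lemma sum_card_componentFinsets (F : SimpleGraph V) :
    ∑ s ∈ F.componentFinsets, #s = Fintype.card V := by
  simpa using (sum_componentFinset F fun _ => (1 : ℕ)).symm

section DivisionSemiring

variable {K : Type*} [DivisionSemiring K] [CharZero K]

lemma sum_inv_card_componentFinset (F : SimpleGraph V) :
    ∑ v, (#(F.componentFinset v) : K)⁻¹ = #F.componentFinsets := by
  rw [sum_componentFinset F fun s => (#s : K)⁻¹, card_eq_sum_ones, Nat.cast_sum]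
  refine sum_congr rfl fun s hs => ?_
  have : (#s : K) ≠ 0 := by exact_mod_cast (card_pos_of_mem_componentFinsets hs).ne'
  rw [nsmul_eq_mul, mul_inv_cancel₀ this, Nat.cast_one]

lemma sum_componentFinset_inv_card (F : SimpleGraph V) (u : V) :
    ∑ v ∈ F.componentFinset u, (#(F.componentFinset v) : K)⁻¹ = 1 := by
  have hu : (#(F.componentFinset u) : K) ≠ 0 := by
    exact_mod_cast (F.card_componentFinset_pos u).ne'
  rw [sum_congr rfl fun v hv => by
      rw [componentFinset_eq_iff.2 (mem_componentFinset.1 hv).symm],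
    sum_const, nsmul_eq_mul, mul_inv_cancel₀ hu]

end DivisionSemiring

lemma componentFinset_sup_edge_of_reachable (huv : ¬F.Reachable u v)
    (hx : F.Reachable x u ∨ F.Reachable x v) :
    (F ⊔ edge u v).componentFinset x = F.componentFinset u ∪ F.componentFinset v := by
  ext y
  simp only [mem_componentFinset, mem_union, reachable_sup_edge_iff]
  grind [Reachable.refl, Reachable.symm, Reachable.trans]

lemma componentFinset_sup_edge_of_not_reachable (hxu : ¬F.Reachable x u)
    (hxv : ¬F.Reachable x v) : (F ⊔ edge u v).componentFinset x = F.componentFinset x := by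
  ext y
  simp only [mem_componentFinset, reachable_sup_edge_iff]
  tauto

lemma componentFinsets_sup_edge (huv : ¬F.Reachable u v) :
    (F ⊔ edge u v).componentFinsets = insert (F.componentFinset u ∪ F.componentFinset v)
      ((F.componentFinsets.erase (F.componentFinset u)).erase (F.componentFinset v)) := by
  ext s
  simp only [mem_insert, mem_erase, mem_componentFinsets, ne_eq]
  constructor
  · rintro ⟨x, rfl⟩
    by_cases hx : F.Reachable x u ∨ F.Reachable x v
    · exact .inl (componentFinset_sup_edge_of_reachable huv hx)
    · rw [not_or] at hx
      rw [componentFinset_sup_edge_of_not_reachable hx.1 hx.2, componentFinset_eq_iff,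
        componentFinset_eq_iff]
      exact .inr ⟨hx.2, hx.1, x, rfl⟩
  · rintro (rfl | ⟨hv, hu, x, rfl⟩)
    · exact ⟨u, componentFinset_sup_edge_of_reachable huv (.inl .rfl)⟩
    · rw [componentFinset_eq_iff] at hu hv
      exact ⟨x, componentFinset_sup_edge_of_not_reachable hu hv⟩

lemma union_notMem_erase_erase_componentFinset (huv : ¬F.Reachable u v) :
    F.componentFinset u ∪ F.componentFinset v ∉
      (F.componentFinsets.erase (F.componentFinset u)).erase (F.componentFinset v) := by
  intro h
  have hs := mem_of_mem_erase (mem_of_mem_erase h)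
  have hu := componentFinset_eq_of_mem hs (mem_union_left _ (self_mem_componentFinset F u))
  have hv := componentFinset_eq_of_mem hs (mem_union_right _ (self_mem_componentFinset F v))
  exact huv (componentFinset_eq_iff.1 (hu.trans hv.symm))

lemma componentFinset_mem_erase (huv : ¬F.Reachable u v) :
    F.componentFinset v ∈ F.componentFinsets.erase (F.componentFinset u) :=
  mem_erase.2 ⟨fun h => huv (componentFinset_eq_iff.1 h.symm),
    componentFinset_mem_componentFinsets F v⟩

lemma card_componentFinsets_sup_edge (huv : ¬F.Reachable u v) :
    #(F ⊔ edge u v).componentFinsets + 1 = #F.componentFinsets := by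
  rw [componentFinsets_sup_edge huv, card_insert_of_notMem
    (union_notMem_erase_erase_componentFinset huv), card_erase_add_one
    (componentFinset_mem_erase huv), card_erase_add_one
    (componentFinset_mem_componentFinsets F u)]

lemma prod_card_componentFinsets_sup_edge (huv : ¬F.Reachable u v) :
    (∏ s ∈ (F ⊔ edge u v).componentFinsets, #s) *
        (#(F.componentFinset u) * #(F.componentFinset v))
      = (#(F.componentFinset u) + #(F.componentFinset v)) * ∏ s ∈ F.componentFinsets, #s := by
  have hdisj : Disjoint (F.componentFinset u) (F.componentFinset v) :=
    Finset.disjoint_left.2 fun _ hu hv =>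
      huv ((mem_componentFinset.1 hu).trans (mem_componentFinset.1 hv).symm)
  rw [componentFinsets_sup_edge huv, prod_insert (union_notMem_erase_erase_componentFinset huv),
    card_union_of_disjoint hdisj, ← mul_prod_erase _ _ (componentFinset_mem_componentFinsets F u),
    ← mul_prod_erase _ _ (componentFinset_mem_erase huv)]
  ring

lemma card_unreachablePairs_sup_edge_lt (huv : ¬F.Reachable u v) :
    #(F ⊔ edge u v).unreachablePairs < #F.unreachablePairs := by
  refine card_lt_card ((ssubset_iff_of_subset fun p => ?_).2 ⟨(u, v), ?_, ?_⟩)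
  · simp only [mem_unreachablePairs]
    exact mt (Reachable.mono le_sup_left)
  · exact mem_unreachablePairs.2 huv
  · simp [reachable_sup_edge]

theorem induction_on_sup_edge {P : SimpleGraph V → Prop} (connected : ∀ F, F.Connected → P F)
    (sup_edge :
      ∀ F, ¬F.Connected → (∀ u v, ¬F.Reachable u v → P (F ⊔ edge u v)) → P F)
    (F : SimpleGraph V) : P F := by
  induction hm : #F.unreachablePairs using Nat.strong_induction_on generalizing F with
  | _ m ih =>
    by_cases hF : F.Connected
    · exact connected F hF
    · exact sup_edge F hF fun u v huv => ih _ (hm ▸ card_unreachablePairs_sup_edge_lt huv) _ rfl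

lemma exists_not_reachable_of_not_connected [Nonempty V] (hF : ¬F.Connected) :
    ∃ u v, ¬F.Reachable u v := by
  by_contra! h
  exact hF ⟨h⟩

lemma componentFinsets_of_connected (hF : F.Connected) : F.componentFinsets = {univ} := by
  have : Nonempty V := hF.nonempty
  have hcomp (u : V) : F.componentFinset u = univ := by
    ext w
    simpa using hF.preconnected u w
  rw [componentFinsets, funext hcomp, image_const univ_nonempty]

lemma ncard_edgeSet_sup_edge (huv : ¬F.Reachable u v) :
    (F ⊔ edge u v).edgeSet.ncard = F.edgeSet.ncard + 1 := by
  have hne : u ≠ v := fun h => huv (h ▸ .rfl)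
  rw [edgeSet_sup, edgeSet_edge_of_ne hne, Set.union_singleton,
    Set.ncard_insert_of_notMem fun h => huv ((mem_edgeSet F).1 h).reachable]

lemma IsTree.ncard_edgeSet_add_one {T : SimpleGraph V} (hT : T.IsTree) :
    T.edgeSet.ncard + 1 = Fintype.card V := by
  rw [Set.ncard_eq_toFinset_card']
  exact hT.card_edgeFinset

theorem IsAcyclic.ncard_edgeSet_add_card_componentFinsets [Nonempty V] (hF : F.IsAcyclic) :
    F.edgeSet.ncard + #F.componentFinsets = Fintype.card V := by
  induction F using induction_on_sup_edge with
  | connected F hconn =>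
    rw [componentFinsets_of_connected hconn, card_singleton,
      IsTree.ncard_edgeSet_add_one ⟨hconn, hF⟩]
  | sup_edge F hconn ih =>
    obtain ⟨u, v, huv⟩ := exists_not_reachable_of_not_connected hconn
    have := ih u v huv (hF.sup_edge_of_not_reachable huv)
    rw [ncard_edgeSet_sup_edge huv, ← card_componentFinsets_sup_edge huv] at *
    omega

lemma spanningTreesAbove_sup_edge (huv : u ≠ v) :
    (F ⊔ edge u v).spanningTreesAbove = {T ∈ F.spanningTreesAbove | T.Adj u v} := by
  ext T
  simp only [spanningTreesAbove, mem_filter, mem_univ, true_and, sup_le_iff, edge_le_iff, huv,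
    false_or]
  tauto

lemma IsAcyclic.card_filter_unreachablePairs_adj [Nonempty V] (hF : F.IsAcyclic)
    {T : SimpleGraph V} (hT : T ∈ F.spanningTreesAbove) :
    #{p ∈ F.unreachablePairs | T.Adj p.1 p.2} = 2 * (#F.componentFinsets - 1) := by
  obtain ⟨hle, hT⟩ : F ≤ T ∧ T.IsTree := by simpa [spanningTreesAbove] using hT
  have hpairs : {p ∈ F.unreachablePairs | T.Adj p.1 p.2} =
      (univ : Finset (V × V)).filter fun (x, y) => (T \ F).Adj x y := by
    ext ⟨a, b⟩
    simp only [mem_filter, mem_unreachablePairs, mem_univ, true_and, sdiff_adj]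
    exact ⟨fun ⟨hr, hadj⟩ => ⟨hadj, fun h => hr h.reachable⟩,
      fun ⟨hadj, hnF⟩ => ⟨fun hr => hnF (hT.isAcyclic.adj_of_le_of_reachable hle hadj hr), hadj⟩⟩
  have hdiff : (T \ F).edgeSet.ncard + F.edgeSet.ncard = T.edgeSet.ncard := by
    rw [edgeSet_sdiff, Set.ncard_sdiff_add_ncard_of_subset (edgeSet_mono hle)]
  have := hT.ncard_edgeSet_add_one
  have := hF.ncard_edgeSet_add_card_componentFinsets
  rw [hpairs, ← two_mul_card_edgeFinset, edgeFinset, ← Set.ncard_eq_toFinset_card']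
  omega

lemma IsAcyclic.sum_card_spanningTreesAbove_sup_edge [Nonempty V] (hF : F.IsAcyclic) :
    ∑ p ∈ F.unreachablePairs, #(F ⊔ edge p.1 p.2).spanningTreesAbove =
      2 * (#F.componentFinsets - 1) * #F.spanningTreesAbove := by
  let r (p : V × V) (T : SimpleGraph V) : Prop := T.Adj p.1 p.2
  calc ∑ p ∈ F.unreachablePairs, #(F ⊔ edge p.1 p.2).spanningTreesAbove
      = ∑ p ∈ F.unreachablePairs, #(F.spanningTreesAbove.bipartiteAbove r p) :=
        sum_congr rfl fun p hp => by
          rw [spanningTreesAbove_sup_edge fun h => mem_unreachablePairs.1 hp (by rw [h])]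
          rfl
    _ = ∑ T ∈ F.spanningTreesAbove, #(F.unreachablePairs.bipartiteBelow r T) :=
        sum_card_bipartiteAbove_eq_sum_card_bipartiteBelow _
    _ = ∑ _T ∈ F.spanningTreesAbove, 2 * (#F.componentFinsets - 1) :=
        sum_congr rfl fun _ hT => hF.card_filter_unreachablePairs_adj hT
    _ = 2 * (#F.componentFinsets - 1) * #F.spanningTreesAbove := by
        rw [sum_const, smul_eq_mul, mul_comm]

section Field

variable {K : Type*} [Field K] [CharZero K]

lemma sum_unreachablePairs_inv_card_componentFinset_snd (F : SimpleGraph V) :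
    ∑ p ∈ F.unreachablePairs, (#(F.componentFinset p.2) : K)⁻¹ =
      Fintype.card V * (#F.componentFinsets - 1) := by
  have hrow (u : V) : ∑ v ∈ {v | ¬F.Reachable u v}, (#(F.componentFinset v) : K)⁻¹ =
      #F.componentFinsets - 1 := by
    have hsplit := sum_filter_add_sum_filter_not univ (F.Reachable u)
      fun v => (#(F.componentFinset v) : K)⁻¹
    change ∑ v ∈ F.componentFinset u, _ + _ = _ at hsplit
    rw [sum_componentFinset_inv_card, sum_inv_card_componentFinset] at hsplit
    linear_combination hsplit
  rw [unreachablePairs, sum_filter, Fintype.sum_prod_type]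
  simp_rw [← sum_filter, hrow, sum_const, card_univ, nsmul_eq_mul]

lemma sum_unreachablePairs_inv_card_componentFinset_fst (F : SimpleGraph V) :
    ∑ p ∈ F.unreachablePairs, (#(F.componentFinset p.1) : K)⁻¹ =
      Fintype.card V * (#F.componentFinsets - 1) := by
  rw [← sum_unreachablePairs_inv_card_componentFinset_snd F]
  exact sum_equiv (Equiv.prodComm V V) (fun p => by simp [reachable_comm]) fun _ _ => rfl

end Field

lemma sum_prod_card_componentFinsets_sup_edge [Nonempty V] (F : SimpleGraph V) :
    ∑ p ∈ F.unreachablePairs, ∏ s ∈ (F ⊔ edge p.1 p.2).componentFinsets, #s =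
      2 * (#F.componentFinsets - 1) * (Fintype.card V * ∏ s ∈ F.componentFinsets, #s) := by
  have hpos (u : V) : (#(F.componentFinset u) : ℚ) ≠ 0 := by
    exact_mod_cast (F.card_componentFinset_pos u).ne'
  have hterm : ∀ p ∈ F.unreachablePairs,
      ((∏ s ∈ (F ⊔ edge p.1 p.2).componentFinsets, #s : ℕ) : ℚ) =
        (∏ s ∈ F.componentFinsets, #s : ℕ) *
          ((#(F.componentFinset p.1) : ℚ)⁻¹ + (#(F.componentFinset p.2) : ℚ)⁻¹) := by
    intro p hp
    have h := prod_card_componentFinsets_sup_edge (mem_unreachablePairs.1 hp)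
    have h' : ((∏ s ∈ (F ⊔ edge p.1 p.2).componentFinsets, #s : ℕ) : ℚ) *
        (#(F.componentFinset p.1) * #(F.componentFinset p.2)) =
          (#(F.componentFinset p.1) + #(F.componentFinset p.2)) *
            (∏ s ∈ F.componentFinsets, #s : ℕ) := by exact_mod_cast h
    field_simp [hpos p.1, hpos p.2]
    linear_combination h'
  rw [← Nat.cast_inj (R := ℚ), Nat.cast_sum, sum_congr rfl hterm, ← mul_sum, sum_add_distrib,
    sum_unreachablePairs_inv_card_componentFinset_fst,
    sum_unreachablePairs_inv_card_componentFinset_snd]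
  push_cast [Nat.cast_sub F.one_le_card_componentFinsets]
  ring

lemma IsTree.spanningTreesAbove_eq (hF : F.IsTree) : F.spanningTreesAbove = {F} := by
  have : Nonempty V := hF.connected.nonempty
  have hmax := maximal_isAcyclic_iff_isTree.2 hF
  ext T
  simp only [spanningTreesAbove, mem_filter, mem_univ, true_and, mem_singleton]
  refine ⟨fun ⟨hle, hT⟩ => (hmax.2 hT.isAcyclic hle).antisymm hle, ?_⟩
  rintro rfl
  exact ⟨le_rfl, hF⟩

theorem IsAcyclic.card_spanningTreesAbove_mul_card [Nonempty V] (hF : F.IsAcyclic) :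
    #F.spanningTreesAbove * Fintype.card V =
      (∏ s ∈ F.componentFinsets, #s) * Fintype.card V ^ (#F.componentFinsets - 1) := by
  induction F using induction_on_sup_edge with
  | connected F hconn =>
    simp [IsTree.spanningTreesAbove_eq ⟨hconn, hF⟩, componentFinsets_of_connected hconn]
  | sup_edge F hconn ih =>
    set k := #F.componentFinsets
    set n := Fintype.card V
    have hk : 2 ≤ k := by
      obtain ⟨u, v, huv⟩ := exists_not_reachable_of_not_connected hconn
      have := card_componentFinsets_sup_edge huv
      have := (F ⊔ edge u v).one_le_card_componentFinsets
      omega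
    have hterm : ∀ p ∈ F.unreachablePairs, #(F ⊔ edge p.1 p.2).spanningTreesAbove * n =
        (∏ s ∈ (F ⊔ edge p.1 p.2).componentFinsets, #s) * n ^ (k - 2) := fun p hp => by
      have huv := mem_unreachablePairs.1 hp
      rw [ih _ _ huv (hF.sup_edge_of_not_reachable huv)]
      have := card_componentFinsets_sup_edge huv
      congr 2
      omega
    have hsum := congrArg (· * n) hF.sum_card_spanningTreesAbove_sup_edge
    simp only [sum_mul, sum_congr rfl hterm] at hsum
    rw [← sum_mul, sum_prod_card_componentFinsets_sup_edge] at hsum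
    have hpow : n * n ^ (k - 2) = n ^ (k - 1) := by
      rw [← pow_succ']
      congr 1
      omega
    refine Nat.eq_of_mul_eq_mul_left (show 0 < 2 * (k - 1) by omega) ?_
    calc 2 * (k - 1) * (#F.spanningTreesAbove * n)
        = 2 * (k - 1) * #F.spanningTreesAbove * n := by ring
      _ = 2 * (k - 1) * (n * ∏ s ∈ F.componentFinsets, #s) * n ^ (k - 2) := hsum.symm
      _ = 2 * (k - 1) * ((∏ s ∈ F.componentFinsets, #s) * n ^ (k - 1)) := by
          rw [← hpow]; ring

lemma three_le_card_componentFinset [DecidableRel F.Adj] (h : 2 ≤ F.degree v) :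
    3 ≤ #(F.componentFinset v) :=
  calc 3 ≤ #(insert v (F.neighborFinset v)) := by
        rw [card_insert_of_notMem (by simp), card_neighborFinset_eq_degree]
        omega
    _ ≤ #(F.componentFinset v) := card_le_card <| insert_subset (self_mem_componentFinset F v)
        fun _ hw => mem_componentFinset.2 ((mem_neighborFinset ..).1 hw).reachable

lemma IsAcyclic.sum_card_sub_one_componentFinsets [Nonempty V] (hF : F.IsAcyclic) :
    ∑ s ∈ F.componentFinsets, (#s - 1) = F.edgeSet.ncard := by
  have hsplit : ∑ s ∈ F.componentFinsets, (#s - 1) + #F.componentFinsets =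
      ∑ s ∈ F.componentFinsets, #s := by
    rw [card_eq_sum_ones, ← sum_add_distrib]
    exact sum_congr rfl fun s hs => Nat.sub_add_cancel (card_pos_of_mem_componentFinsets hs)
  have := hF.ncard_edgeSet_add_card_componentFinsets
  rw [sum_card_componentFinsets] at hsplit
  omega

lemma natCard_eq_card_spanningTreesAbove (F : SimpleGraph V) :
    Nat.card {T : SimpleGraph V // F ≤ T ∧ T.Connected ∧ T.IsAcyclic} =
      #F.spanningTreesAbove := by
  simp only [spanningTreesAbove, isTree_iff]
  rw [Nat.card_eq_fintype_card, Fintype.card_subtype]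

end

end SimpleGraph

lemma four_mul_le_three_mul_two_pow_pred {a : ℕ} (ha : 3 ≤ a) : 4 * a ≤ 3 * 2 ^ (a - 1) := by
  induction a, ha using Nat.le_induction with
  | base => norm_num
  | succ a ha ih =>
    obtain ⟨b, rfl⟩ : ∃ b, a = b + 1 := ⟨a - 1, by omega⟩
    simp only [Nat.add_sub_cancel] at ih ⊢
    rw [pow_succ]
    omega

lemma four_mul_prod_le_three_mul_two_pow_sum {ι : Type*} {s : Finset ι} {f : ι → ℕ}
    (hf : ∀ i ∈ s, 1 ≤ f i) {j : ι} (hj : j ∈ s) (hfj : 3 ≤ f j) :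
    4 * ∏ i ∈ s, f i ≤ 3 * 2 ^ ∑ i ∈ s, (f i - 1) := by
  classical
  rw [← mul_prod_erase _ _ hj, ← add_sum_erase _ _ hj, pow_add, ← prod_pow_eq_pow_sum,
    ← mul_assoc, ← mul_assoc]
  refine Nat.mul_le_mul (four_mul_le_three_mul_two_pow_pred hfj) (prod_le_prod' fun i hi => ?_)
  have := Nat.lt_two_pow_self (n := f i - 1)
  have := hf i (mem_of_mem_erase hi)
  omega

theorem count_trees_containing_nonmatching_general (n t : ℕ)
    (F : SimpleGraph (Fin n)) [DecidableRel F.Adj] (hF : F.IsAcyclic)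
    (hedges : F.edgeFinset.card = t) (hnotmatching : ∃ v : Fin n, 2 ≤ F.degree v) :
    4 * (Nat.card {T : SimpleGraph (Fin n) // F ≤ T ∧ T.Connected ∧ T.IsAcyclic}
        * n ^ (t + 2)) ≤ 3 * (2 ^ t * n ^ n) := by
  obtain ⟨v, hv⟩ := hnotmatching
  have : Nonempty (Fin n) := ⟨v⟩
  have hncard : F.edgeSet.ncard = t := by
    rw [← hedges, ← coe_edgeFinset, Set.ncard_coe_finset]
  have hcount := hF.ncard_edgeSet_add_card_componentFinsets
  have hk := F.one_le_card_componentFinsets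
  have hcayley := hF.card_spanningTreesAbove_mul_card
  have hprod : 4 * ∏ s ∈ F.componentFinsets, #s ≤ 3 * 2 ^ t := by
    have := four_mul_prod_le_three_mul_two_pow_sum
      (fun _ hs => card_pos_of_mem_componentFinsets hs)
      (F.componentFinset_mem_componentFinsets v) (three_le_card_componentFinset hv)
    rwa [hF.sum_card_sub_one_componentFinsets, hncard] at this
  rw [Fintype.card_fin] at hcount hcayley
  rw [natCard_eq_card_spanningTreesAbove]
  calc 4 * (#F.spanningTreesAbove * n ^ (t + 2))
      = 4 * (#F.spanningTreesAbove * n) * n ^ (t + 1) := by ring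
    _ = 4 * (∏ s ∈ F.componentFinsets, #s) * n ^ (#F.componentFinsets - 1 + (t + 1)) := by
      rw [hcayley, pow_add]; ring
    _ = 4 * (∏ s ∈ F.componentFinsets, #s) * n ^ n := by congr 2; omega
    _ ≤ 3 * 2 ^ t * n ^ n := Nat.mul_le_mul_right _ hprod
    _ = 3 * (2 ^ t * n ^ n) := by ring

/-- If `F` is a forest in `K_n` with exactly `t` edges (`1 ≤ t ≤ n/2`) that is not a union
of `t` pairwise vertex-disjoint edges, then the number of spanning trees of `K_n`
containing `F` is at most `(3/4)·2^t·n^(n-t-2)` (stated multiplied through by `4·n^(t+2)`). -/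
theorem count_trees_containing_nonmatching (n t : ℕ) (ht : 1 ≤ t) (htn : 2 * t ≤ n)
    (F : SimpleGraph (Fin n)) [DecidableRel F.Adj] (hF : F.IsAcyclic)
    (hedges : F.edgeFinset.card = t) (hnotmatching : ∃ v : Fin n, 2 ≤ F.degree v) :
    4 * (Nat.card {T : SimpleGraph (Fin n) // F ≤ T ∧ T.Connected ∧ T.IsAcyclic}
        * n ^ (t + 2)) ≤ 3 * (2 ^ t * n ^ n) :=
  count_trees_containing_nonmatching_general n t F hF hedges hnotmatching
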